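/- arXiv:2409.03898 — 2 statements merged into one kernel-verified Lean document; each statement's English description precedes it below -/
import Mathlib

section
/- Let G be a finite DAG and let L ∈ ℤ⁺ be such that every SPP pebbling strategy of G with memory bound k·r uses at least L I/O moves. Then every MPP pebbling strategy of G with k processors and memory bound r per processor uses at least L/k I/O moves. -/
/-!
A `k`-processor strategy is simulated by one processor whose fast memory is the union of the
`k` red sets, which never holds more than `k * r` nodes. Each parallel move acts on at most `k`
nodes and is replayed node by node, so it costs at most `k` sequential I/O moves; a red pebble
leaves the pooled memory only once no processor holds it any more. The resulting single-processor
strategy has memory bound `k * r` and at most `k` times as many I/O moves, hence `L ≤ k · I/O`.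
-/

open scoped Classical

/-- A relation is a DAG edge relation if its transitive closure is irreflexive
(i.e., the directed graph is acyclic). -/
def IsDag {V : Type*} (E : V → V → Prop) : Prop := Irreflexive (Relation.TransGen E)

namespace MPP

variable {V : Type*} [DecidableEq V] {k : ℕ}

/-- A configuration of multiprocessor red-blue pebbling: a set of red pebbles
for each of the `k` processors, and a set of blue pebbles. -/
structure Conf (V : Type*) (k : ℕ) where
  red : Fin k → Finset V
  blue : Finset V

/-- Moves of multiprocessor red-blue pebbling. `save`/`load` are the parallel I/O
moves (R1-M)/(R2-M), `compute` is (R3-M), and the removals are (R4-M). -/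
inductive Move (V : Type*) (k : ℕ) where
  | save (m : ℕ) (f : Fin m → Fin k) (v : Fin m → V)
  | load (m : ℕ) (f : Fin m → Fin k) (v : Fin m → V)
  | compute (m : ℕ) (f : Fin m → Fin k) (v : Fin m → V)
  | removeRed (j : Fin k) (x : V)
  | removeBlue (x : V)

/-- Add, for each `i`, the node `v i` to the red pebbles of processor `f i`. -/
def addRed (C : Conf V k) {m : ℕ} (f : Fin m → Fin k) (v : Fin m → V) :
    Fin k → Finset V :=
  fun j => C.red j ∪ (Finset.univ.filter (fun i => f i = j)).image v

/-- The effect of a move on a configuration. -/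
def apply : Move V k → Conf V k → Conf V k
  | .save _ _ v, C => ⟨C.red, C.blue ∪ Finset.univ.image v⟩
  | .load _ f v, C => ⟨addRed C f v, C.blue⟩
  | .compute _ f v, C => ⟨addRed C f v, C.blue⟩
  | .removeRed j x, C => ⟨Function.update C.red j (C.red j \ {x}), C.blue⟩
  | .removeBlue x, C => ⟨C.red, C.blue \ {x}⟩

/-- When a move may legally be performed in a given configuration. -/
def Legal (E : V → V → Prop) : Conf V k → Move V k → Prop
  | C, .save m f v => m ≤ k ∧ Function.Injective f ∧ ∀ i, v i ∈ C.red (f i)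
  | C, .load m f v => m ≤ k ∧ Function.Injective f ∧ ∀ i, v i ∈ C.blue
  | C, .compute m f v =>
      m ≤ k ∧ Function.Injective f ∧ ∀ i, ∀ u, E u (v i) → u ∈ C.red (f i)
  | _, .removeRed _ _ => True
  | _, .removeBlue _ => True

/-- A configuration respects the fast-memory bound `r` for every processor. -/
def Valid (r : ℕ) (C : Conf V k) : Prop := ∀ j, (C.red j).card ≤ r

/-- `Run E r C ms C'` : starting from configuration `C`, the list of moves `ms`
may be legally executed (respecting the memory bound `r` throughout) and leads
to configuration `C'`. -/
inductive Run (E : V → V → Prop) (r : ℕ) : Conf V k → List (Move V k) → Conf V k → Prop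
  | nil (C : Conf V k) : Run E r C [] C
  | cons {C C'' : Conf V k} {mv : Move V k} {ms : List (Move V k)} :
      Legal E C mv → Valid r (apply mv C) → Run E r (apply mv C) ms C'' →
      Run E r C (mv :: ms) C''

/-- Cost of a single move: `g` for I/O, `1` for compute, `0` for removal. -/
def moveCost (g : ℕ) : Move V k → ℕ
  | .save .. => g
  | .load .. => g
  | .compute .. => 1
  | .removeRed .. => 0
  | .removeBlue .. => 0

/-- Total cost of a sequence of moves. -/
def cost (g : ℕ) (ms : List (Move V k)) : ℕ := (ms.map (moveCost g)).sum

def isIO : Move V k → Bool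
  | .save .. => true
  | .load .. => true
  | _ => false

/-- The number of I/O moves in a sequence of moves. -/
def ioCount (ms : List (Move V k)) : ℕ := (ms.filter isIO).length

def isCompute : Move V k → Bool
  | .compute .. => true
  | _ => false

/-- The number of compute moves in a sequence of moves. -/
def computeCount (ms : List (Move V k)) : ℕ := (ms.filter isCompute).length

/-- A sink of the DAG: a node with no outgoing edge. -/
def IsSink (E : V → V → Prop) (v : V) : Prop := ∀ u, ¬ E v u

/-- A terminal configuration: every sink carries at least one pebble. -/
def Terminal (E : V → V → Prop) (C : Conf V k) : Prop :=
  ∀ v, IsSink E v → v ∈ C.blue ∨ ∃ j, v ∈ C.red j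

/-- The initial (all-empty) configuration. -/
def init (V : Type*) (k : ℕ) : Conf V k := ⟨fun _ => ∅, ∅⟩

/-- `ms` is a pebbling strategy: a legal run from the empty configuration ending
in a terminal configuration. -/
def IsPebbling (E : V → V → Prop) (r : ℕ) (ms : List (Move V k)) : Prop :=
  ∃ Cf, Run E r (init V k) ms Cf ∧ Terminal E Cf

/-- The optimal (minimum) cost of a pebbling strategy with `k` processors,
memory bound `r` per processor, and I/O cost `g`. -/
noncomputable def optCost (E : V → V → Prop) (k r g : ℕ) : ℕ :=
  sInf {c | ∃ ms : List (Move V k), IsPebbling E r ms ∧ cost g ms = c}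

/-- The minimum number of I/O moves among all minimum-cost pebbling strategies. -/
noncomputable def optIO (E : V → V → Prop) (k r g : ℕ) : ℕ :=
  sInf {q | ∃ ms : List (Move V k),
    IsPebbling E r ms ∧ cost g ms = optCost E k r g ∧ ioCount ms = q}

/-- The maximum in-degree `Δ_in` of the DAG. -/
noncomputable def maxInDeg (E : V → V → Prop) [Fintype V] : ℕ :=
  Finset.univ.sup fun v => (Finset.univ.filter fun u => E u v).card

/-- The set of nodes computed by a move. -/
def computes : Move V k → Set V
  | .compute _ _ v => Set.range v
  | _ => ∅

/-- `x` is computed by the move at position `s` of `ms`. -/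
def ComputedAt (ms : List (Move V k)) (s : ℕ) (x : V) : Prop :=
  ∃ mv, ms[s]? = some mv ∧ x ∈ computes mv

/-- The set of nodes computed by some move strictly before position `t`. -/
def computedBefore (ms : List (Move V k)) (t : ℕ) : Set V :=
  {x | ∃ s < t, ComputedAt ms s x}

/-- `x` is ready at position `t`: it has not yet been computed, but all its
in-neighbors have been. -/
def Ready (E : V → V → Prop) (ms : List (Move V k)) (t : ℕ) (x : V) : Prop :=
  x ∉ computedBefore ms t ∧ ∀ u, E u x → u ∈ computedBefore ms t

/-- The number of nodes that are ready at position `t`. -/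
noncomputable def readyCount (E : V → V → Prop) [Fintype V]
    (ms : List (Move V k)) (t : ℕ) : ℕ :=
  (Finset.univ.filter (Ready E ms t)).card

end MPP

namespace SPP

variable {V : Type*} [DecidableEq V]

/-- A configuration of single-processor red-blue pebbling. -/
structure Conf (V : Type*) where
  red : Finset V
  blue : Finset V

/-- Moves of single-processor red-blue pebbling: `load` is (R1-S), `save` is
(R2-S), `compute` is (R3-S), and the removals are (R4-S). -/
inductive Move (V : Type*) where
  | load (v : V)
  | save (v : V)
  | compute (v : V)
  | removeRed (v : V)
  | removeBlue (v : V)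

/-- The effect of a move on a configuration. -/
def apply : Move V → Conf V → Conf V
  | .load v, C => ⟨insert v C.red, C.blue⟩
  | .save v, C => ⟨C.red, insert v C.blue⟩
  | .compute v, C => ⟨insert v C.red, C.blue⟩
  | .removeRed v, C => ⟨C.red.erase v, C.blue⟩
  | .removeBlue v, C => ⟨C.red, C.blue.erase v⟩

/-- When a move may legally be performed. -/
def Legal (E : V → V → Prop) : Conf V → Move V → Prop
  | C, .load v => v ∈ C.blue
  | C, .save v => v ∈ C.red
  | C, .compute v => ∀ u, E u v → u ∈ C.red
  | _, .removeRed _ => True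
  | _, .removeBlue _ => True

/-- A configuration respects the fast-memory bound `r`. -/
def Valid (r : ℕ) (C : Conf V) : Prop := C.red.card ≤ r

/-- `Run E r C ms C'` : starting from configuration `C`, the list of moves `ms`
may be legally executed (respecting the memory bound `r` throughout) and leads
to configuration `C'`. -/
inductive Run (E : V → V → Prop) (r : ℕ) : Conf V → List (Move V) → Conf V → Prop
  | nil (C : Conf V) : Run E r C [] C
  | cons {C C'' : Conf V} {mv : Move V} {ms : List (Move V)} :
      Legal E C mv → Valid r (apply mv C) → Run E r (apply mv C) ms C'' →
      Run E r C (mv :: ms) C''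

def isIO : Move V → Bool
  | .load _ => true
  | .save _ => true
  | _ => false

/-- The number of I/O moves (of type (R1-S) or (R2-S)) in a sequence of moves. -/
def ioCount (ms : List (Move V)) : ℕ := (ms.filter isIO).length

def isComputeOrRemove : Move V → Bool
  | .compute _ => true
  | .removeRed _ => true
  | .removeBlue _ => true
  | _ => false

/-- A sink of the DAG: a node with no outgoing edge. -/
def IsSink (E : V → V → Prop) (v : V) : Prop := ∀ u, ¬ E v u

/-- A terminal configuration: every sink carries a pebble. -/
def Terminal (E : V → V → Prop) (C : Conf V) : Prop :=
  ∀ v, IsSink E v → v ∈ C.blue ∨ v ∈ C.red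

/-- The initial (empty) configuration. -/
def init (V : Type*) : Conf V := ⟨∅, ∅⟩

/-- `ms` is an SPP pebbling strategy with memory bound `r`. -/
def IsPebbling (E : V → V → Prop) (r : ℕ) (ms : List (Move V)) : Prop :=
  ∃ Cf, Run E r (init V) ms Cf ∧ Terminal E Cf

end SPP

namespace SPP

variable {V : Type*} {E : V → V → Prop} {r : ℕ}

theorem ioCount_append (l₁ l₂ : List (Move V)) :
    ioCount (l₁ ++ l₂) = ioCount l₁ + ioCount l₂ := by
  simp only [ioCount, List.filter_append, List.length_append]

theorem ioCount_map_save (l : List V) : ioCount (l.map Move.save) = l.length := by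
  simp [ioCount, List.filter_map, Function.comp_def, isIO]

theorem ioCount_map_load (l : List V) : ioCount (l.map Move.load) = l.length := by
  simp [ioCount, List.filter_map, Function.comp_def, isIO]

theorem ioCount_map_compute (l : List V) : ioCount (l.map Move.compute) = 0 := by
  simp [ioCount, List.filter_map, Function.comp_def, isIO]

variable [DecidableEq V]

theorem Run.append {C C' C'' : Conf V} {l₁ l₂ : List (Move V)} (h₁ : Run E r C l₁ C')
    (h₂ : Run E r C' l₂ C'') : Run E r C (l₁ ++ l₂) C'' := by
  induction h₁ with
  | nil => exact h₂
  | cons hl hv _ ih => exact .cons hl hv (ih h₂)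

theorem Run.single {C : Conf V} {mv : Move V} (hl : Legal E C mv) (hv : Valid r (apply mv C)) :
    Run E r C [mv] (apply mv C) :=
  .cons hl hv (.nil _)

theorem run_map_save (l : List V) (C : Conf V) (h : ∀ x ∈ l, x ∈ C.red) (hv : Valid r C) :
    Run E r C (l.map Move.save) ⟨C.red, C.blue ∪ l.toFinset⟩ := by
  induction l generalizing C with
  | nil => simpa using Run.nil C
  | cons x l ih =>
    have hrest := ih ⟨C.red, insert x C.blue⟩ (fun y hy => h y (List.mem_cons_of_mem _ hy)) hv
    refine .cons (h x List.mem_cons_self) hv ?_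
    simpa [apply, Finset.insert_union, Finset.union_insert] using hrest

theorem run_map_of_apply_eq_insert (mk : V → Move V)
    (happly : ∀ x C, apply (mk x) C = ⟨insert x C.red, C.blue⟩) (l : List V) (C : Conf V)
    (hlegal : ∀ x ∈ l, ∀ R, C.red ⊆ R → Legal E ⟨R, C.blue⟩ (mk x))
    (hv : (C.red ∪ l.toFinset).card ≤ r) :
    Run E r C (l.map mk) ⟨C.red ∪ l.toFinset, C.blue⟩ := by
  induction l generalizing C with
  | nil => simpa using Run.nil C
  | cons x l ih =>
    have hunion : insert x C.red ∪ l.toFinset = C.red ∪ (x :: l).toFinset := by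
      simp [Finset.insert_union, Finset.union_insert]
    have hrest := ih ⟨insert x C.red, C.blue⟩
      (fun y hy R hR => hlegal y (List.mem_cons_of_mem _ hy) R
        ((Finset.subset_insert _ _).trans hR))
      (by simpa [hunion] using hv)
    refine .cons (hlegal x List.mem_cons_self C.red subset_rfl) ?_ ?_
    · rw [Valid, happly]
      refine (Finset.card_le_card ?_).trans hv
      rw [← hunion]
      exact Finset.subset_union_left
    · simpa [happly, hunion] using hrest

end SPP

namespace MPP

variable {V : Type*} {k r : ℕ} {E : V → V → Prop}

theorem ioCount_cons (mv : Move V k) (ms : List (Move V k)) :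
    ioCount (mv :: ms) = ioCount [mv] + ioCount ms := by
  rw [← List.singleton_append]
  simp only [ioCount, List.filter_append, List.length_append]

variable [DecidableEq V]

def Conf.redUnion (C : Conf V k) : Finset V := Finset.univ.biUnion C.red

def Conf.toSPP (C : Conf V k) : SPP.Conf V := ⟨C.redUnion, C.blue⟩

theorem Conf.mem_redUnion {C : Conf V k} {x : V} : x ∈ C.redUnion ↔ ∃ j, x ∈ C.red j := by
  simp [Conf.redUnion]

theorem Valid.card_redUnion_le {C : Conf V k} (hv : Valid r C) : C.redUnion.card ≤ k * r :=
  calc C.redUnion.card ≤ ∑ j, (C.red j).card := Finset.card_biUnion_le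
    _ ≤ ∑ _j : Fin k, r := Finset.sum_le_sum fun j _ => hv j
    _ = k * r := by simp

theorem Conf.toSPP_init : (init V k).toSPP = SPP.init V := by
  simp [Conf.toSPP, Conf.redUnion, init, SPP.init, Finset.eq_empty_iff_forall_notMem]

theorem Conf.redUnion_addRed (C : Conf V k) {m : ℕ} (f : Fin m → Fin k) (v : Fin m → V) :
    (⟨addRed C f v, C.blue⟩ : Conf V k).redUnion = C.redUnion ∪ (List.ofFn v).toFinset := by
  ext y
  simp only [Conf.mem_redUnion, addRed, Finset.mem_union, Finset.mem_image, Finset.mem_filter,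
    Finset.mem_univ, true_and, List.mem_toFinset, List.mem_ofFn]
  grind

theorem Conf.mem_redUnion_apply_removeRed {C : Conf V k} {j : Fin k} {x y : V} :
    y ∈ (apply (.removeRed j x) C).redUnion ↔ y ∈ C.redUnion ∧ (y = x → ∃ j' ≠ j, x ∈ C.red j') := by
  simp only [Conf.mem_redUnion, apply, Function.update_apply]
  grind

theorem Conf.toSPP_addRed (C : Conf V k) {m : ℕ} (f : Fin m → Fin k) (v : Fin m → V) :
    (⟨addRed C f v, C.blue⟩ : Conf V k).toSPP =
      ⟨C.toSPP.red ∪ (List.ofFn v).toFinset, C.toSPP.blue⟩ :=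
  congrArg (SPP.Conf.mk · C.blue) (C.redUnion_addRed f v)

theorem Conf.redUnion_apply_removeRed_of_mem {C : Conf V k} {j : Fin k} {x : V}
    (hx : x ∈ (apply (.removeRed j x) C).redUnion) :
    (apply (.removeRed j x) C).redUnion = C.redUnion := by
  rw [mem_redUnion_apply_removeRed] at hx
  ext y
  rw [mem_redUnion_apply_removeRed]
  grind

theorem Conf.redUnion_apply_removeRed_of_notMem {C : Conf V k} {j : Fin k} {x : V}
    (hx : x ∉ (apply (.removeRed j x) C).redUnion) :
    (apply (.removeRed j x) C).redUnion = C.redUnion.erase x := by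
  rw [mem_redUnion_apply_removeRed] at hx
  ext y
  rw [mem_redUnion_apply_removeRed, Finset.mem_erase]
  grind

theorem Conf.sppRun_addRed (mk : V → SPP.Move V)
    (happly : ∀ x C, SPP.apply (mk x) C = ⟨insert x C.red, C.blue⟩) (C : Conf V k) {m : ℕ}
    (f : Fin m → Fin k) (v : Fin m → V)
    (hlegal : ∀ i, ∀ R, C.redUnion ⊆ R → SPP.Legal E ⟨R, C.blue⟩ (mk (v i)))
    (hv : Valid r (⟨addRed C f v, C.blue⟩ : Conf V k)) :
    SPP.Run E (k * r) C.toSPP ((List.ofFn v).map mk) (⟨addRed C f v, C.blue⟩ : Conf V k).toSPP := by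
  have hcard := hv.card_redUnion_le
  rw [C.redUnion_addRed] at hcard
  rw [C.toSPP_addRed f v]
  refine SPP.run_map_of_apply_eq_insert mk happly _ _ (fun x hx => ?_) hcard
  obtain ⟨i, rfl⟩ := List.mem_ofFn.1 hx
  exact hlegal i

theorem Conf.exists_sppRun_removeRed (C : Conf V k) (j : Fin k) (x : V)
    (hv : Valid r (apply (.removeRed j x) C)) :
    ∃ ss, SPP.Run E (k * r) C.toSPP ss (apply (.removeRed j x) C).toSPP ∧ SPP.ioCount ss = 0 := by
  have hcard := hv.card_redUnion_le
  show ∃ ss, SPP.Run E _ _ ss ⟨(apply (.removeRed j x) C).redUnion, C.blue⟩ ∧ _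
  by_cases hx : x ∈ (apply (.removeRed j x) C).redUnion
  · rw [redUnion_apply_removeRed_of_mem hx]
    exact ⟨[], .nil _, rfl⟩
  · rw [redUnion_apply_removeRed_of_notMem hx] at hcard ⊢
    exact ⟨[.removeRed x], .single trivial hcard, rfl⟩

theorem exists_sppRun_of_legal {C : Conf V k} {mv : Move V k} (hl : Legal E C mv)
    (hv : Valid r (apply mv C)) :
    ∃ ss, SPP.Run E (k * r) C.toSPP ss (apply mv C).toSPP ∧
      SPP.ioCount ss ≤ k * ioCount [mv] := by
  cases mv with
  | save m f v =>
    obtain ⟨hm, -, hred⟩ := hl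
    refine ⟨(List.ofFn v).map .save, ?_, ?_⟩
    · show SPP.Run E _ _ _ ⟨C.redUnion, C.blue ∪ Finset.univ.image v⟩
      rw [Fin.univ_image_def]
      refine SPP.run_map_save _ _ (fun x hx => ?_) hv.card_redUnion_le
      obtain ⟨i, rfl⟩ := List.mem_ofFn.1 hx
      exact Conf.mem_redUnion.2 ⟨f i, hred i⟩
    · rw [SPP.ioCount_map_save, List.length_ofFn]
      exact hm.trans_eq (mul_one k).symm
  | load m f v =>
    obtain ⟨hm, -, hblue⟩ := hl
    refine ⟨(List.ofFn v).map .load, C.sppRun_addRed _ (fun _ _ => rfl) f v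
      (fun i _ _ => hblue i) hv, ?_⟩
    rw [SPP.ioCount_map_load, List.length_ofFn]
    exact hm.trans_eq (mul_one k).symm
  | compute m f v =>
    obtain ⟨-, -, hpred⟩ := hl
    refine ⟨(List.ofFn v).map .compute, C.sppRun_addRed _ (fun _ _ => rfl) f v
      (fun i R hR u hu => hR (Conf.mem_redUnion.2 ⟨f i, hpred i u hu⟩)) hv, ?_⟩
    rw [SPP.ioCount_map_compute]
    exact Nat.zero_le _
  | removeRed j x =>
    obtain ⟨ss, hss, hio⟩ := C.exists_sppRun_removeRed (E := E) j x hv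
    exact ⟨ss, hss, hio.trans_le (Nat.zero_le _)⟩
  | removeBlue x =>
    refine ⟨[.removeBlue x], ?_, Nat.zero_le _⟩
    show SPP.Run E _ _ _ ⟨C.redUnion, C.blue \ {x}⟩
    rw [Finset.sdiff_singleton_eq_erase]
    exact .single trivial hv.card_redUnion_le

theorem Run.exists_sppRun {C C' : Conf V k} {ms : List (Move V k)} (h : Run E r C ms C') :
    ∃ ss, SPP.Run E (k * r) C.toSPP ss C'.toSPP ∧ SPP.ioCount ss ≤ k * ioCount ms := by
  induction h with
  | nil C => exact ⟨[], .nil _, by simp [SPP.ioCount]⟩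
  | cons hl hv _ ih =>
    obtain ⟨ss₁, hrun₁, hio₁⟩ := exists_sppRun_of_legal hl hv
    obtain ⟨ss₂, hrun₂, hio₂⟩ := ih
    refine ⟨ss₁ ++ ss₂, hrun₁.append hrun₂, ?_⟩
    rw [SPP.ioCount_append, ioCount_cons, Nat.mul_add]
    exact Nat.add_le_add hio₁ hio₂

theorem IsPebbling.exists_sppPebbling {ms : List (Move V k)} (h : IsPebbling E r ms) :
    ∃ ss, SPP.IsPebbling E (k * r) ss ∧ SPP.ioCount ss ≤ k * ioCount ms := by
  obtain ⟨Cf, hrun, hterm⟩ := h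
  obtain ⟨ss, hss, hio⟩ := hrun.exists_sppRun
  rw [Conf.toSPP_init] at hss
  refine ⟨ss, ⟨Cf.toSPP, hss, fun v hv => ?_⟩, hio⟩
  exact (hterm v hv).imp_right Conf.mem_redUnion.2

end MPP

theorem stmt3_general {V : Type} [DecidableEq V] (E : V → V → Prop)
    (k r L : ℕ)
    (hSPP : ∀ ss : List (SPP.Move V), SPP.IsPebbling E (k * r) ss → L ≤ SPP.ioCount ss)
    (ms : List (MPP.Move V k)) (hms : MPP.IsPebbling E r ms) :
    (L : ℝ) / k ≤ (MPP.ioCount ms : ℝ) := by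
  obtain ⟨ss, hss, hio⟩ := hms.exists_sppPebbling
  have hL : L ≤ MPP.ioCount ms * k := (hSPP ss hss).trans (hio.trans_eq (mul_comm _ _))
  exact div_le_of_le_mul₀ (Nat.cast_nonneg _) (Nat.cast_nonneg _) (by exact_mod_cast hL)

/-- If every SPP pebbling strategy of `G` with memory bound `k·r`
uses at least `L` I/O moves, then every MPP pebbling strategy of `G` with `k`
processors and memory bound `r` per processor uses at least `L/k` I/O moves. -/
theorem stmt3 {V : Type} [Fintype V] [DecidableEq V] (E : V → V → Prop)
    (hdag : IsDag E) (k r L : ℕ) (hk : 0 < k) (hr0 : 0 < r) (hL : 0 < L)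
    (hSPP : ∀ ss : List (SPP.Move V), SPP.IsPebbling E (k * r) ss → L ≤ SPP.ioCount ss)
    (ms : List (MPP.Move V k)) (hms : MPP.IsPebbling E r ms) :
    (L : ℝ) / k ≤ (MPP.ioCount ms : ℝ) :=
  stmt3_general E k r L hSPP ms hms
end

section
/- For all k, m, g ∈ ℤ⁺, the DAG G_{k,m} (k disjoint doubled chains, n = 2km nodes) admits an MPP pebbling strategy with k processors, memory bound r = 3 per processor and I/O cost g of total cost at most 2m·(g+1) = (g+1)·n/k; hence OPT ≤ (g+1)·n/k. -/
open scoped Classical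

/-- The doubled-chain DAG `G_{k,m}`: `k` disjoint copies of the gadget on `2m`
nodes consisting of a directed path `u₁ → … → u_{2m}` together with the extra
edges `(u_i, u_{m+i})` for `i ∈ [m]` (indices here are 0-based). -/
def doubledChains (k m : ℕ) : Fin k × Fin (2 * m) → Fin k × Fin (2 * m) → Prop :=
  fun a b => a.1 = b.1 ∧
    (((b.2 : ℕ) = (a.2 : ℕ) + 1) ∨ ((a.2 : ℕ) < m ∧ (b.2 : ℕ) = (a.2 : ℕ) + m))

namespace MPP

variable {V : Type*} [DecidableEq V] {k : ℕ}

theorem run_append {E : V → V → Prop} {r : ℕ} {C C' C'' : Conf V k}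
    {ms ms' : List (Move V k)} (h1 : Run E r C ms C') (h2 : Run E r C' ms' C'') :
    Run E r C (ms ++ ms') C'' := by
  induction h1 with
  | nil => simpa using h2
  | cons hleg hval _ ih => exact Run.cons hleg hval (ih h2)

theorem run_cons' {E : V → V → Prop} {r : ℕ} {C C' C'' : Conf V k}
    {mv : Move V k} {ms : List (Move V k)} (h1 : Legal E C mv)
    (h2 : apply mv C = C') (h3 : Valid r C') (h4 : Run E r C' ms C'') :
    Run E r C (mv :: ms) C'' := by
  subst h2; exact Run.cons h1 h3 h4

theorem addRed_id (C : Conf V k) (v : Fin k → V) :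
    addRed C id v = fun j => insert (v j) (C.red j) := by
  funext j
  ext x
  simp only [addRed, Finset.mem_union, Finset.mem_image, Finset.mem_filter,
    Finset.mem_univ, true_and, id_eq, Finset.mem_insert]
  constructor
  · rintro (h | ⟨i, rfl, rfl⟩)
    · exact Or.inr h
    · exact Or.inl rfl
  · rintro (rfl | h)
    · exact Or.inr ⟨j, rfl, rfl⟩
    · exact Or.inl h

theorem run_removeList {E : V → V → Prop} {r : ℕ} (x : Fin k → V) :
    ∀ (l : List (Fin k)) (C : Conf V k), Valid r C →
      Run E r C (l.map fun j => Move.removeRed j (x j))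
        ⟨fun j => if j ∈ l then C.red j \ {x j} else C.red j, C.blue⟩ := by
  intro l
  induction l with
  | nil =>
    intro C hC
    have : (⟨fun j => if j ∈ ([] : List (Fin k)) then C.red j \ {x j} else C.red j,
        C.blue⟩ : Conf V k) = C := by
      simp
    rw [this]; simpa using Run.nil C
  | cons a l ih =>
    intro C hC
    set C1 : Conf V k := ⟨Function.update C.red a (C.red a \ {x a}), C.blue⟩ with hC1
    have hval : Valid r C1 := by
      intro j
      by_cases h : j = a
      · subst h
        simp only [hC1, Function.update_self]
        exact le_trans (Finset.card_le_card (Finset.sdiff_subset)) (hC j)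
      · simp only [hC1, Function.update_of_ne h]
        exact hC j
    have happly : apply (Move.removeRed a (x a)) C = C1 := rfl
    refine run_cons' trivial happly hval ?_
    have hrun := ih C1 hval
    have heq : (⟨fun j => if j ∈ l then C1.red j \ {x j} else C1.red j, C1.blue⟩ : Conf V k)
        = ⟨fun j => if j ∈ a :: l then C.red j \ {x j} else C.red j, C.blue⟩ := by
      refine Conf.mk.injEq _ _ _ _ ▸ ?_
      constructor
      · funext j
        by_cases hja : j = a
        · subst hja
          by_cases hjl : j ∈ l <;>
            simp [hjl, hC1, Function.update_self, Finset.sdiff_idem]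
        · by_cases hjl : j ∈ l <;>
            simp [hjl, hja, hC1, Function.update_of_ne hja]
      · rfl
    rw [heq] at hrun
    exact hrun

theorem cost_append (g : ℕ) (a b : List (Move V k)) :
    cost g (a ++ b) = cost g a + cost g b := by
  simp [cost]

end MPP


section Construction

open MPP

variable (k m : ℕ)

/-- The node at height `t` on each chain (one per processor). -/
def nd (hm : 0 < m) (t : ℕ) : Fin k → Fin k × Fin (2 * m) :=
  fun j => (j, ⟨t % (2 * m), Nat.mod_lt _ (by omega)⟩)

/-- Blue pebbles: all nodes of height `≤ i`. -/
def Bset (i : ℕ) : Finset (Fin k × Fin (2 * m)) :=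
  Finset.univ.filter (fun p => (p.2 : ℕ) ≤ i)

lemma mem_Bset (i : ℕ) (p : Fin k × Fin (2 * m)) :
    p ∈ Bset k m i ↔ (p.2 : ℕ) ≤ i := by simp [Bset]

lemma nd_val (hm : 0 < m) (t : ℕ) (ht : t < 2 * m) (j : Fin k) :
    ((nd k m hm t j).2 : ℕ) = t := Nat.mod_eq_of_lt ht

lemma nd_ne (hm : 0 < m) {t s : ℕ} (ht : t < 2 * m) (hs : s < 2 * m)
    (hts : t ≠ s) (j j' : Fin k) : nd k m hm t j ≠ nd k m hm s j' := by
  intro h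
  apply hts
  have := congrArg (fun p => ((p.2 : ℕ))) h
  simpa [nd_val k m hm t ht, nd_val k m hm s hs] using this

/-- Remove `x j` from processor `j`'s memory, for each `j`. -/
def remAll (x : Fin k → Fin k × Fin (2 * m)) : List (Move (Fin k × Fin (2 * m)) k) :=
  (List.finRange k).map fun j => Move.removeRed j (x j)

def stepA (hm : 0 < m) (i : ℕ) : List (Move (Fin k × Fin (2 * m)) k) :=
  Move.compute k id (nd k m hm i) :: Move.save k id (nd k m hm i) ::
    (if i = 0 then [] else remAll k m (nd k m hm (i - 1)))

def stepB (hm : 0 < m) (i : ℕ) : List (Move (Fin k × Fin (2 * m)) k) :=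
  Move.load k id (nd k m hm i) :: Move.compute k id (nd k m hm (m + i)) ::
    (remAll k m (nd k m hm (m + i - 1)) ++ remAll k m (nd k m hm i))

def CA (hm : 0 < m) (i : ℕ) : Conf (Fin k × Fin (2 * m)) k :=
  ⟨fun j => {nd k m hm i j}, Bset k m i⟩

def CB (hm : 0 < m) (i : ℕ) : Conf (Fin k × Fin (2 * m)) k :=
  ⟨fun j => {nd k m hm (m + i) j}, Bset k m (m - 1)⟩

lemma run_remAll {r : ℕ} (x : Fin k → Fin k × Fin (2 * m))
    (C : Conf (Fin k × Fin (2 * m)) k) (hC : Valid r C) :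
    Run (doubledChains k m) r C (remAll k m x)
      ⟨fun j => C.red j \ {x j}, C.blue⟩ := by
  have h := run_removeList (E := doubledChains k m) (r := r) x (List.finRange k) C hC
  have heq : (⟨fun j => if j ∈ List.finRange k then C.red j \ {x j} else C.red j,
      C.blue⟩ : Conf (Fin k × Fin (2 * m)) k) = ⟨fun j => C.red j \ {x j}, C.blue⟩ := by
    simp [List.mem_finRange]
  rw [heq] at h
  exact h

end Construction


section Steps

open MPP

variable (k m : ℕ)

lemma apply_compute_id {V : Type*} [DecidableEq V] {k : ℕ}
    (C : Conf V k) (v : Fin k → V) :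
    apply (Move.compute k id v) C = ⟨fun j => insert (v j) (C.red j), C.blue⟩ := by
  rw [show apply (Move.compute k id v) C = ⟨addRed C id v, C.blue⟩ from rfl, addRed_id]

lemma apply_load_id {V : Type*} [DecidableEq V] {k : ℕ}
    (C : Conf V k) (v : Fin k → V) :
    apply (Move.load k id v) C = ⟨fun j => insert (v j) (C.red j), C.blue⟩ := by
  rw [show apply (Move.load k id v) C = ⟨addRed C id v, C.blue⟩ from rfl, addRed_id]

lemma apply_save_id {V : Type*} [DecidableEq V] {k : ℕ}
    (C : Conf V k) (v : Fin k → V) :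
    apply (Move.save k id v) C = ⟨C.red, C.blue ∪ Finset.univ.image v⟩ := rfl

lemma eq_nd (hm : 0 < m) {t : ℕ} (ht : t < 2 * m) (u : Fin k × Fin (2 * m))
    (j : Fin k) (h1 : u.1 = j) (h2 : (u.2 : ℕ) = t) : u = nd k m hm t j := by
  obtain ⟨a, b⟩ := u
  simp only [nd, Prod.mk.injEq]
  exact ⟨h1, Fin.ext (by simp only [Nat.mod_eq_of_lt ht]; exact h2)⟩

lemma mem_image_nd (hm : 0 < m) {i : ℕ} (hi : i < 2 * m) (p : Fin k × Fin (2 * m)) :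
    p ∈ Finset.univ.image (nd k m hm i) ↔ (p.2 : ℕ) = i := by
  simp only [Finset.mem_image, Finset.mem_univ, true_and]
  constructor
  · rintro ⟨j, rfl⟩; exact nd_val k m hm i hi j
  · intro h; exact ⟨p.1, (eq_nd k m hm hi p p.1 rfl h).symm⟩

lemma Bset_zero (hm : 0 < m) :
    (∅ : Finset (Fin k × Fin (2 * m))) ∪ Finset.univ.image (nd k m hm 0) = Bset k m 0 := by
  ext p
  simp [mem_Bset, mem_image_nd k m hm (by omega : 0 < 2 * m), Nat.le_zero]

lemma Bset_succ (hm : 0 < m) (i : ℕ) (h1 : 1 ≤ i) (hi : i < 2 * m) :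
    Bset k m (i - 1) ∪ Finset.univ.image (nd k m hm i) = Bset k m i := by
  ext p
  simp only [Finset.mem_union, mem_Bset, mem_image_nd k m hm hi]
  omega

lemma run_stepA_zero (hm : 0 < m) :
    Run (doubledChains k m) 3 (init (Fin k × Fin (2 * m)) k)
      (stepA k m hm 0) (CA k m hm 0) := by
  refine run_cons' (C' := ⟨fun j => {nd k m hm 0 j}, ∅⟩) ?_ ?_ ?_ ?_
  · refine ⟨le_refl k, Function.injective_id, ?_⟩
    intro i u hE
    exfalso
    obtain ⟨_, hs⟩ := hE
    rw [nd_val k m hm 0 (by omega)] at hs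
    omega
  · rw [apply_compute_id]; rfl
  · intro j; simp
  refine run_cons' (C' := CA k m hm 0) ?_ ?_ ?_ (Run.nil _)
  · exact ⟨le_refl k, Function.injective_id, fun i => by simp⟩
  · rw [apply_save_id]
    show (⟨_, ∅ ∪ _⟩ : Conf _ _) = _
    rw [Bset_zero]; rfl
  · intro j; simp [CA]

lemma insert_sdiff_singleton {α : Type*} [DecidableEq α] {a b : α} (h : a ≠ b) :
    insert a ({b} : Finset α) \ {b} = {a} := by
  ext x
  simp only [Finset.mem_sdiff, Finset.mem_insert, Finset.mem_singleton]
  constructor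
  · rintro ⟨h1 | h1, h2⟩
    · exact h1
    · exact absurd h1 h2
  · rintro rfl; exact ⟨Or.inl rfl, h⟩

lemma run_stepA_succ (hm : 0 < m) (i : ℕ) (h1 : 1 ≤ i) (h2 : i < m) :
    Run (doubledChains k m) 3 (CA k m hm (i - 1)) (stepA k m hm i) (CA k m hm i) := by
  have hi2 : i < 2 * m := by omega
  have hi12 : i - 1 < 2 * m := by omega
  rw [stepA, if_neg (by omega : ¬ i = 0)]
  refine run_cons'
    (C' := ⟨fun j => insert (nd k m hm i j) {nd k m hm (i - 1) j}, Bset k m (i - 1)⟩)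
    ?_ ?_ ?_ ?_
  · refine ⟨le_refl k, Function.injective_id, ?_⟩
    intro idx u hE
    obtain ⟨hf, hs⟩ := hE
    rw [nd_val k m hm i hi2] at hs
    have hu2 : (u.2 : ℕ) = i - 1 := by
      rcases hs with h | ⟨hlt, h⟩
      · omega
      · omega
    show u ∈ ({nd k m hm (i - 1) idx} : Finset _)
    exact Finset.mem_singleton.mpr (eq_nd k m hm hi12 u idx hf hu2)
  · rw [apply_compute_id]; rfl
  · intro j
    exact le_trans (Finset.card_insert_le _ _) (by simp)
  refine run_cons'
    (C' := ⟨fun j => insert (nd k m hm i j) {nd k m hm (i - 1) j}, Bset k m i⟩)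
    ?_ ?_ ?_ ?_
  · exact ⟨le_refl k, Function.injective_id, fun idx => Finset.mem_insert_self _ _⟩
  · rw [apply_save_id]
    show (⟨_, Bset k m (i - 1) ∪ _⟩ : Conf _ _) = _
    rw [Bset_succ k m hm i h1 hi2]
  · intro j
    exact le_trans (Finset.card_insert_le _ _) (by simp)
  have hval : Valid 3 (⟨fun j => insert (nd k m hm i j) {nd k m hm (i - 1) j},
      Bset k m i⟩ : Conf (Fin k × Fin (2 * m)) k) := by
    intro j
    exact le_trans (Finset.card_insert_le _ _) (by simp)
  have hr := run_remAll k m (nd k m hm (i - 1)) _ hval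
  have heq : (⟨fun j => insert (nd k m hm i j) {nd k m hm (i - 1) j} \ {nd k m hm (i - 1) j},
      Bset k m i⟩ : Conf (Fin k × Fin (2 * m)) k) = CA k m hm i := by
    have : (fun j => insert (nd k m hm i j) {nd k m hm (i - 1) j} \ {nd k m hm (i - 1) j})
        = fun j : Fin k => ({nd k m hm i j} : Finset (Fin k × Fin (2 * m))) := by
      funext j
      exact insert_sdiff_singleton (nd_ne k m hm hi2 hi12 (by omega) j j)
    rw [this]; rfl
  rw [heq] at hr
  exact hr

end Steps


section StepB

open MPP

variable (k m : ℕ)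

lemma run_stepB (hm : 0 < m) (i : ℕ) (h2 : i < m) :
    Run (doubledChains k m) 3
      (⟨fun j => {nd k m hm (m + i - 1) j}, Bset k m (m - 1)⟩ :
        Conf (Fin k × Fin (2 * m)) k)
      (stepB k m hm i) (CB k m hm i) := by
  have hi2 : i < 2 * m := by omega
  have hmi : m + i < 2 * m := by omega
  have hmi1 : m + i - 1 < 2 * m := by omega
  rw [stepB]
  -- load
  refine run_cons'
    (C' := ⟨fun j => insert (nd k m hm i j) {nd k m hm (m + i - 1) j}, Bset k m (m - 1)⟩)
    ?_ ?_ ?_ ?_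
  · refine ⟨le_refl k, Function.injective_id, ?_⟩
    intro idx
    rw [mem_Bset, nd_val k m hm i hi2]
    omega
  · rw [apply_load_id]
  · intro j; exact le_trans (Finset.card_insert_le _ _) (by simp)
  -- compute
  refine run_cons'
    (C' := ⟨fun j => insert (nd k m hm (m + i) j)
        (insert (nd k m hm i j) {nd k m hm (m + i - 1) j}), Bset k m (m - 1)⟩)
    ?_ ?_ ?_ ?_
  · refine ⟨le_refl k, Function.injective_id, ?_⟩
    intro idx u hE
    obtain ⟨hf, hs⟩ := hE
    rw [nd_val k m hm (m + i) hmi] at hs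
    show u ∈ insert (nd k m hm i idx) ({nd k m hm (m + i - 1) idx} : Finset _)
    rcases hs with h | ⟨hlt, h⟩
    · have hu2 : (u.2 : ℕ) = m + i - 1 := by omega
      exact Finset.mem_insert.mpr (Or.inr (Finset.mem_singleton.mpr
        (eq_nd k m hm hmi1 u idx hf hu2)))
    · have hu2 : (u.2 : ℕ) = i := by omega
      exact Finset.mem_insert.mpr (Or.inl (eq_nd k m hm hi2 u idx hf hu2))
  · rw [apply_compute_id]
  · intro j
    exact le_trans (Finset.card_insert_le _ _)
      (Nat.succ_le_succ (le_trans (Finset.card_insert_le _ _) (by simp)))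
  -- removals
  have hval2 : Valid 3 (⟨fun j => insert (nd k m hm (m + i) j)
      (insert (nd k m hm i j) {nd k m hm (m + i - 1) j}), Bset k m (m - 1)⟩ :
      Conf (Fin k × Fin (2 * m)) k) := by
    intro j
    exact le_trans (Finset.card_insert_le _ _)
      (Nat.succ_le_succ (le_trans (Finset.card_insert_le _ _) (by simp)))
  have hr1 := run_remAll k m (nd k m hm (m + i - 1)) _ hval2
  have hval3 : Valid 3 (⟨fun j => insert (nd k m hm (m + i) j)
      (insert (nd k m hm i j) {nd k m hm (m + i - 1) j}) \ {nd k m hm (m + i - 1) j},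
      Bset k m (m - 1)⟩ : Conf (Fin k × Fin (2 * m)) k) := by
    intro j
    exact le_trans (Finset.card_le_card Finset.sdiff_subset) (hval2 j)
  have hr2 := run_remAll k m (nd k m hm i) _ hval3
  have heq : (⟨fun j => (insert (nd k m hm (m + i) j)
      (insert (nd k m hm i j) {nd k m hm (m + i - 1) j}) \ {nd k m hm (m + i - 1) j})
        \ {nd k m hm i j},
      Bset k m (m - 1)⟩ : Conf (Fin k × Fin (2 * m)) k) = CB k m hm i := by
    have hfun : (fun j => (insert (nd k m hm (m + i) j)
        (insert (nd k m hm i j) {nd k m hm (m + i - 1) j}) \ {nd k m hm (m + i - 1) j})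
          \ {nd k m hm i j})
        = fun j : Fin k => ({nd k m hm (m + i) j} : Finset (Fin k × Fin (2 * m))) := by
      funext j
      have hca := nd_ne k m hm hmi hmi1 (by omega) j j
      have hcb := nd_ne k m hm hmi hi2 (by omega) j j
      ext x
      simp only [Finset.mem_sdiff, Finset.mem_insert, Finset.mem_singleton]
      constructor
      · rintro ⟨⟨h | h | h, ha⟩, hb⟩
        · exact h
        · exact absurd h hb
        · exact absurd h ha
      · rintro rfl
        exact ⟨⟨Or.inl rfl, hca⟩, hcb⟩
    rw [hfun]; rfl
  rw [heq] at hr2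
  exact run_append hr1 hr2

end StepB


section Assembly

open MPP

variable (k m : ℕ)

def msA (hm : 0 < m) : ℕ → List (Move (Fin k × Fin (2 * m)) k)
  | 0 => stepA k m hm 0
  | (i + 1) => msA hm i ++ stepA k m hm (i + 1)

def msB (hm : 0 < m) : ℕ → List (Move (Fin k × Fin (2 * m)) k)
  | 0 => stepB k m hm 0
  | (i + 1) => msB hm i ++ stepB k m hm (i + 1)

lemma run_msA (hm : 0 < m) : ∀ i, i < m →
    Run (doubledChains k m) 3 (init (Fin k × Fin (2 * m)) k) (msA k m hm i)
      (CA k m hm i) := by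
  intro i
  induction i with
  | zero => intro _; exact run_stepA_zero k m hm
  | succ i ih =>
    intro h
    refine run_append (ih (by omega)) ?_
    have := run_stepA_succ k m hm (i + 1) (by omega) h
    simpa using this

lemma run_msB (hm : 0 < m) : ∀ i, i < m →
    Run (doubledChains k m) 3 (CA k m hm (m - 1)) (msB k m hm i) (CB k m hm i) := by
  intro i
  induction i with
  | zero =>
    intro _
    have := run_stepB k m hm 0 hm
    have heq : (⟨fun j => {nd k m hm (m + 0 - 1) j}, Bset k m (m - 1)⟩ :
        Conf (Fin k × Fin (2 * m)) k) = CA k m hm (m - 1) := by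
      simp only [CA, Nat.add_zero]
    rwa [heq] at this
  | succ i ih =>
    intro h
    refine run_append (ih (by omega)) ?_
    have := run_stepB k m hm (i + 1) h
    have heq : (⟨fun j => {nd k m hm (m + (i + 1) - 1) j}, Bset k m (m - 1)⟩ :
        Conf (Fin k × Fin (2 * m)) k) = CB k m hm i := by
      simp only [CB, show m + (i + 1) - 1 = m + i by omega]
    rwa [heq] at this

lemma cost_cons {V : Type*} [DecidableEq V] {k : ℕ} (g : ℕ) (a : Move V k)
    (l : List (Move V k)) : cost g (a :: l) = moveCost g a + cost g l := by
  simp [cost]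

lemma cost_remAll (g : ℕ) (x : Fin k → Fin k × Fin (2 * m)) :
    cost g (remAll k m x) = 0 := by
  simp [cost, remAll, List.map_map, Function.comp_def, moveCost]

lemma cost_stepA (hm : 0 < m) (g i : ℕ) : cost g (stepA k m hm i) = g + 1 := by
  rw [stepA, cost_cons, cost_cons]
  by_cases h : i = 0
  · simp [h, moveCost, cost]; omega
  · rw [if_neg h, cost_remAll]
    simp [moveCost]; omega

lemma cost_stepB (hm : 0 < m) (g i : ℕ) : cost g (stepB k m hm i) = g + 1 := by
  rw [stepB, cost_cons, cost_cons, cost_append, cost_remAll, cost_remAll]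
  simp [moveCost]

lemma cost_msA (hm : 0 < m) (g : ℕ) : ∀ i, cost g (msA k m hm i) = (i + 1) * (g + 1) := by
  intro i
  induction i with
  | zero => simpa [msA] using cost_stepA k m hm g 0
  | succ i ih =>
    rw [msA, cost_append, ih, cost_stepA]
    ring

lemma cost_msB (hm : 0 < m) (g : ℕ) : ∀ i, cost g (msB k m hm i) = (i + 1) * (g + 1) := by
  intro i
  induction i with
  | zero => simpa [msB] using cost_stepB k m hm g 0
  | succ i ih =>
    rw [msB, cost_append, ih, cost_stepB]
    ring

lemma terminal_CB (hm : 0 < m) : Terminal (doubledChains k m) (CB k m hm (m - 1)) := by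
  intro v hsink
  right
  refine ⟨v.1, ?_⟩
  have hv2 : (v.2 : ℕ) = 2 * m - 1 := by
    by_contra h
    have hlt : (v.2 : ℕ) + 1 < 2 * m := by
      have := v.2.isLt
      omega
    exact hsink (v.1, ⟨(v.2 : ℕ) + 1, hlt⟩) ⟨rfl, Or.inl rfl⟩
  show v ∈ ({nd k m hm (m + (m - 1)) v.1} : Finset _)
  refine Finset.mem_singleton.mpr (eq_nd k m hm (by omega) v v.1 rfl ?_)
  omega

end Assembly


/-- For all `k, m, g ∈ ℤ⁺`, the DAG `G_{k,m}` (with `n = 2km` nodes)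
admits an MPP pebbling strategy with `k` processors, memory bound `r = 3` per
processor and I/O cost `g` of total cost at most `2m·(g+1) = (g+1)·n/k`; hence
`OPT ≤ (g+1)·n/k`. -/
theorem stmt5 (k m g : ℕ) (hk : 0 < k) (hm : 0 < m) (hg : 0 < g) :
    (∃ ms : List (MPP.Move (Fin k × Fin (2 * m)) k),
        MPP.IsPebbling (doubledChains k m) 3 ms ∧ MPP.cost g ms ≤ 2 * m * (g + 1)) ∧
    MPP.optCost (doubledChains k m) k 3 g ≤ 2 * m * (g + 1) := by
  set ms := msA k m hm (m - 1) ++ msB k m hm (m - 1) with hms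
  have hrun : MPP.Run (doubledChains k m) 3 (MPP.init (Fin k × Fin (2 * m)) k) ms
      (CB k m hm (m - 1)) :=
    MPP.run_append (run_msA k m hm (m - 1) (by omega)) (run_msB k m hm (m - 1) (by omega))
  have hpeb : MPP.IsPebbling (doubledChains k m) 3 ms :=
    ⟨_, hrun, terminal_CB k m hm⟩
  have hcost : MPP.cost g ms = 2 * m * (g + 1) := by
    rw [hms, MPP.cost_append, cost_msA, cost_msB, show m - 1 + 1 = m by omega]
    ring
  refine ⟨⟨ms, hpeb, le_of_eq hcost⟩, ?_⟩
  exact Nat.sInf_le ⟨ms, hpeb, hcost⟩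
end
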